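/- On the lattice Z with the Dirac operator D as above, for any state φ on C₀(Z) given by a probability distribution (p_k)_{k∈Z} and any n ∈ Z, the spectral distance from φ to δ_n equals Σ_{k∈Z} |k−n| p_k (possibly infinite). -/

import Mathlib

/-!
The commutator `[D, a]` sends `|k⟩₊` to `(a k - a (k + 1)) |k + 1⟩₋` and `|k⟩₋` to
`(a k - a (k - 1)) |k - 1⟩₊`: it permutes the basis up to weights, so its norm is the largest jump
of `a`, and `‖[D, a]‖ ≤ 1` says exactly that `a` is `1`-Lipschitz on `ℤ`. Hence
`φ(a) - a n = Σ (a k - a n) p k ≤ Σ |k - n| p k`. Conversely, the tents that equal `|k - n|` on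
`|k - n| ≤ r` and vanish for `|k - n| ≥ 2 r` are finitely supported and `1`-Lipschitz, and as
`r → ∞` they recover every finite partial sum of `Σ |k - n| p k`.
-/

open ContinuousLinearMap Filter Topology NNReal

/-- The basis vector `|n⟩₊`/`|n⟩₋` of `H = l²(ℤ) ⊗ ℂ² = l²(ℤ × Bool)`. -/
noncomputable def latticeBasis (n : ℤ) (s : Bool) : lp (fun _ : ℤ × Bool => ℂ) 2 :=
  lp.single 2 (n, s) 1

namespace lp

variable {ι 𝕜 : Type*} [NontriviallyNormedField 𝕜] [DecidableEq ι] {p : ENNReal} [Fact (1 ≤ p)]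

theorem norm_le_of_apply_single_eq_smul_single (hp : p ≠ ⊤)
    (T : lp (fun _ : ι => 𝕜) p →L[𝕜] lp (fun _ : ι => 𝕜) p) (σ : ι ≃ ι) (c : ι → 𝕜) {K : ℝ}
    (hK : 0 ≤ K) (hc : ∀ i, ‖c i‖ ≤ K)
    (hT : ∀ i, T (lp.single p i 1) = c i • lp.single p (σ i) 1) : ‖T‖ ≤ K := by
  have hp' : 0 < p.toReal := ENNReal.toReal_pos (zero_lt_one.trans_le Fact.out).ne' hp
  have hT_single : ∀ i (z : 𝕜), T (lp.single p i z) = lp.single p (σ i) (c i * z) := fun i z =>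
    calc T (lp.single p i z) = z • T (lp.single p i 1) := by
          rw [← map_smul, ← lp.single_smul, smul_eq_mul, mul_one]
      _ = lp.single p (σ i) (c i * z) := by
          rw [hT, smul_smul, ← lp.single_smul, smul_eq_mul, mul_one, mul_comm]
  refine T.opNorm_le_bound hK fun x => ?_
  have hTx : HasSum (fun i => lp.single p (σ i) (c i * x i)) (T x) := by
    simpa only [hT_single] using T.hasSum (lp.hasSum_single hp x)
  have hTx_apply : ∀ i, T x (σ i) = c i * x i := fun i => by
    have h := (lp.evalCLM 𝕜 (fun _ : ι => 𝕜) p (σ i)).hasSum hTx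
    change HasSum (fun j => (lp.single (E := fun _ : ι => 𝕜) p (σ j) (c j * x j) (σ i) : 𝕜))
      (T x (σ i)) at h
    simpa using h.unique (hasSum_single i fun j hj => by simp [σ.injective.ne hj])
  refine lp.norm_le_of_forall_sum_le hp' (by positivity) fun s => ?_
  calc ∑ j ∈ s, ‖T x j‖ ^ p.toReal
      = ∑ i ∈ s.map σ.symm.toEmbedding, ‖c i * x i‖ ^ p.toReal := by
        rw [Finset.sum_map]; simp [← hTx_apply]
    _ ≤ ∑ i ∈ s.map σ.symm.toEmbedding, K ^ p.toReal * ‖x i‖ ^ p.toReal := by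
        gcongr with i
        rw [norm_mul, Real.mul_rpow (norm_nonneg _) (norm_nonneg _)]
        gcongr
        exact hc i
    _ ≤ K ^ p.toReal * ‖x‖ ^ p.toReal := by
        rw [← Finset.mul_sum]
        gcongr
        exact lp.sum_rpow_le_norm_rpow hp' x _
    _ = (K * ‖x‖) ^ p.toReal := (Real.mul_rpow hK (norm_nonneg x)).symm

end lp

theorem Int.lipschitzWith_iff_abs_add_one_sub_le {a : ℤ → ℝ} {K : ℝ≥0} :
    LipschitzWith K a ↔ ∀ k, |a (k + 1) - a k| ≤ K := by
  refine ⟨fun ha k => by simpa [Real.dist_eq, Int.dist_eq] using ha.dist_le_mul (k + 1) k,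
    fun h => LipschitzWith.of_dist_le_mul fun k m => ?_⟩
  wlog hmk : m ≤ k generalizing k m
  · rw [dist_comm, dist_comm k]
    exact this m k (le_of_not_ge hmk)
  induction k, hmk using Int.leInduction with
  | base => simp
  | succ k hmk ih =>
    have hmk' : (m : ℝ) ≤ k := by exact_mod_cast hmk
    have hdist : dist (k + 1) m = dist k m + 1 := by
      simp only [Int.dist_eq, Int.cast_add, Int.cast_one]
      rw [abs_of_nonneg (by linarith), abs_of_nonneg (by linarith)]
      ring
    calc dist (a (k + 1)) (a m) ≤ dist (a (k + 1)) (a k) + dist (a k) (a m) := dist_triangle _ _ _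
      _ ≤ K + K * dist k m := add_le_add (by rw [Real.dist_eq]; exact h k) ih
      _ = K * dist (k + 1) m := by rw [hdist]; ring

theorem ENNReal.ofReal_le_tsum_ofReal {ι : Type*} {f : ι → ℝ} {x : ℝ} (hf : HasSum f x) :
    ENNReal.ofReal x ≤ ∑' i, ENNReal.ofReal (f i) := by
  have hpos : Summable fun i => max (f i) 0 :=
    hf.summable.abs.of_nonneg_of_le (fun _ => le_max_right _ _)
      fun i => max_le (le_abs_self _) (abs_nonneg _)
  calc ENNReal.ofReal x ≤ ENNReal.ofReal (∑' i, max (f i) 0) :=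
        ENNReal.ofReal_le_ofReal (hasSum_le (fun i => le_max_left _ _) hf hpos.hasSum)
    _ = ∑' i, ENNReal.ofReal (max (f i) 0) :=
        ENNReal.ofReal_tsum_of_nonneg (fun _ => le_max_right _ _) hpos
    _ = ∑' i, ENNReal.ofReal (f i) := by simp

theorem ENNReal.ofReal_tsum_mul_sub_le {ι : Type*} {a p w : ι → ℝ} {c : ℝ}
    (hap : Summable fun i => a i * p i) (hp : HasSum p 1) (hp0 : ∀ i, 0 ≤ p i)
    (hw : ∀ i, a i - c ≤ w i) :
    ENNReal.ofReal ((∑' i, a i * p i) - c) ≤ ∑' i, ENNReal.ofReal (w i * p i) := by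
  have hsum : HasSum (fun i => (a i - c) * p i) ((∑' i, a i * p i) - c) := by
    simpa [sub_mul] using hap.hasSum.sub (hp.mul_left c)
  exact (ENNReal.ofReal_le_tsum_ofReal hsum).trans <|
    ENNReal.tsum_le_tsum fun i => ENNReal.ofReal_le_ofReal (by gcongr; exacts [hp0 i, hw i])

theorem Filter.Tendsto.summable_mul {ι : Type*} {a p : ι → ℝ}
    (ha : Tendsto a cofinite (𝓝 0)) (hp : Summable p) : Summable fun i => a i * p i := by
  obtain ⟨C, hC⟩ := isBounded_iff_forall_norm_le.1 (Metric.isBounded_range_of_tendsto_cofinite ha)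
  refine Summable.of_norm_bounded (hp.norm.mul_left C) fun i => ?_
  rw [norm_mul]
  gcongr
  exact hC _ ⟨i, rfl⟩

section Tent

variable {X : Type*} [PseudoMetricSpace X]

noncomputable def tent (x₀ : X) (r : ℝ) (x : X) : ℝ :=
  max 0 (min (dist x x₀) (2 * r - dist x x₀))

theorem tent_self (x₀ : X) (r : ℝ) : tent x₀ r x₀ = 0 := by
  simp [tent]

theorem tent_of_dist_le {x₀ x : X} {r : ℝ} (h : dist x x₀ ≤ r) : tent x₀ r x = dist x x₀ := by
  rw [tent, min_eq_left (by linarith), max_eq_right dist_nonneg]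

theorem tent_nonneg (x₀ : X) (r : ℝ) (x : X) : 0 ≤ tent x₀ r x :=
  le_max_left _ _

theorem lipschitzWith_tent (x₀ : X) (r : ℝ) : LipschitzWith 1 (tent x₀ r) := by
  have hsub : LipschitzWith 1 fun x => 2 * r - dist x x₀ := by
    simpa using (LipschitzWith.const (2 * r)).sub (LipschitzWith.dist_left x₀)
  have h := ((LipschitzWith.dist_left x₀).min hsub).const_max 0
  rwa [max_self] at h

theorem hasCompactSupport_tent [ProperSpace X] (x₀ : X) (r : ℝ) :
    HasCompactSupport (tent x₀ r) :=
  HasCompactSupport.intro (isCompact_closedBall x₀ (2 * r)) fun x hx => by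
    rw [Metric.mem_closedBall, not_le] at hx
    exact max_eq_left (min_le_of_right_le (by linarith))

theorem sum_ofReal_dist_mul_le_tent {p : X → ℝ}
    (hp0 : ∀ x, 0 ≤ p x) {x₀ : X} {r : ℝ} {s : Finset X} (hs : ∀ x ∈ s, dist x x₀ ≤ r)
    (hsum : Summable fun x => tent x₀ r x * p x) :
    ∑ x ∈ s, ENNReal.ofReal (dist x x₀ * p x) ≤
      ENNReal.ofReal ((∑' x, tent x₀ r x * p x) - tent x₀ r x₀) := by
  rw [tent_self, sub_zero, ← ENNReal.ofReal_sum_of_nonneg fun x _ => by have := hp0 x; positivity]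
  refine ENNReal.ofReal_le_ofReal ?_
  calc ∑ x ∈ s, dist x x₀ * p x = ∑ x ∈ s, tent x₀ r x * p x :=
        Finset.sum_congr rfl fun x hx => by rw [tent_of_dist_le (hs x hx)]
    _ ≤ ∑' x, tent x₀ r x * p x :=
        hsum.sum_le_tsum s fun x _ => mul_nonneg (tent_nonneg x₀ r x) (hp0 x)

end Tent

def latticeHop (i : ℤ × Bool) : ℤ × Bool := (if i.2 then i.1 + 1 else i.1 - 1, !i.2)

theorem latticeHop_involutive : Function.Involutive latticeHop := by
  rintro ⟨k, _ | _⟩ <;> simp [latticeHop]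

theorem norm_latticeBasis (n : ℤ) (s : Bool) : ‖latticeBasis n s‖ = 1 := by
  simp [latticeBasis, lp.norm_single]

section Commutator

variable {D M : lp (fun _ : ℤ × Bool => ℂ) 2 →L[ℂ] lp (fun _ : ℤ × Bool => ℂ) 2} {a : ℤ → ℝ}
  (hD₁ : ∀ n : ℤ, D (latticeBasis n true) = latticeBasis (n + 1) false)
  (hD₂ : ∀ n : ℤ, D (latticeBasis n false) = latticeBasis (n - 1) true)
  (hM : ∀ (k : ℤ) (s : Bool), M (latticeBasis k s) = (a k : ℂ) • latticeBasis k s)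
include hD₁ hD₂ hM

theorem commutator_apply_latticeBasis (i : ℤ × Bool) :
    (D ∘L M - M ∘L D) (latticeBasis i.1 i.2) =
      ((a i.1 - a (latticeHop i).1 : ℝ) : ℂ) • latticeBasis (latticeHop i).1 (latticeHop i).2 := by
  obtain ⟨k, _ | _⟩ := i <;>
    simp only [latticeHop, sub_apply, comp_apply, hM, map_smul, hD₁, hD₂, Complex.ofReal_sub,
      sub_smul, Bool.not_true, Bool.not_false, if_true, Bool.false_eq_true, if_false]

theorem norm_commutator_le_iff {K : ℝ≥0} :
    ‖D ∘L M - M ∘L D‖ ≤ K ↔ LipschitzWith K a := by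
  rw [Int.lipschitzWith_iff_abs_add_one_sub_le]
  constructor
  · intro hK k
    have h := (D ∘L M - M ∘L D).le_opNorm (latticeBasis k true)
    rw [commutator_apply_latticeBasis hD₁ hD₂ hM (k, true)] at h
    rw [norm_smul, Complex.norm_real, Real.norm_eq_abs, norm_latticeBasis, norm_latticeBasis,
      mul_one, mul_one] at h
    simpa [latticeHop, abs_sub_comm] using h.trans hK
  · intro hK
    refine lp.norm_le_of_apply_single_eq_smul_single ENNReal.ofNat_ne_top _
      latticeHop_involutive.toPerm _ K.2 (fun i => ?_)
      (fun i => commutator_apply_latticeBasis hD₁ hD₂ hM i)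
    rw [Complex.norm_real, Real.norm_eq_abs]
    obtain ⟨k, _ | _⟩ := i
    · simpa [latticeHop, abs_sub_comm] using hK (k - 1)
    · simpa [latticeHop, abs_sub_comm] using hK k

end Commutator

/-- On the lattice `ℤ` with the Dirac operator `D|n⟩₊ = |n+1⟩₋`, `D|n⟩₋ = |n-1⟩₊`, for any
state `φ` on `C₀(ℤ)` given by a probability distribution `(p_k)` and any `n ∈ ℤ`, the
spectral distance between `φ` and the pure state `δ_n` equals `Σ_k |k - n| p_k`
(possibly infinite, hence computed in `ℝ≥0∞`). -/
theorem lattice_spectral_distance_to_pure_state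
    (D : lp (fun _ : ℤ × Bool => ℂ) 2 →L[ℂ] lp (fun _ : ℤ × Bool => ℂ) 2)
    (hD₁ : ∀ n : ℤ, D (latticeBasis n true) = latticeBasis (n + 1) false)
    (hD₂ : ∀ n : ℤ, D (latticeBasis n false) = latticeBasis (n - 1) true)
    (A : (ℤ → ℝ) → (lp (fun _ : ℤ × Bool => ℂ) 2 →L[ℂ] lp (fun _ : ℤ × Bool => ℂ) 2))
    (hA : ∀ a : ℤ → ℝ, Filter.Tendsto a Filter.cofinite (nhds 0) →
      ∀ (k : ℤ) (s : Bool), A a (latticeBasis k s) = (a k : ℂ) • latticeBasis k s)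
    (p : ℤ → ℝ) (hp0 : ∀ k, 0 ≤ p k) (hp1 : (∑' k, p k) = 1)
    (n : ℤ) :
    (⨆ (a : ℤ → ℝ) (_ : Filter.Tendsto a Filter.cofinite (nhds 0))
        (_ : ‖D ∘L A a - A a ∘L D‖ ≤ 1),
      ENNReal.ofReal ((∑' k, a k * p k) - a n)) =
    ∑' k : ℤ, ENNReal.ofReal (|(k : ℝ) - (n : ℝ)| * p k) := by
  have hp : HasSum p 1 := by
    have hsum : Summable p := by
      by_contra h
      simp [tsum_eq_zero_of_not_summable h] at hp1
    exact hp1 ▸ hsum.hasSum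
  simp_rw [← Int.dist_eq]
  refine le_antisymm (iSup_le fun a => iSup₂_le fun ha hnorm => ?_) ?_
  · have hlip : LipschitzWith 1 a :=
      (norm_commutator_le_iff hD₁ hD₂ (hA a ha)).1 (by simpa using hnorm)
    refine ENNReal.ofReal_tsum_mul_sub_le (ha.summable_mul hp.summable) hp hp0 fun k => ?_
    simpa [Real.dist_eq] using (le_abs_self _).trans (hlip.dist_le_mul k n)
  · rw [ENNReal.tsum_eq_iSup_sum]
    refine iSup_le fun s => ?_
    obtain ⟨r, hs⟩ : ∃ r, ∀ k ∈ s, dist k n ≤ r :=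
      ⟨_, fun k hk => Finset.single_le_sum (f := fun k => dist k n) (fun _ _ => dist_nonneg) hk⟩
    have htent : Tendsto (tent n r) cofinite (𝓝 0) := by
      simpa [cocompact_eq_cofinite] using (hasCompactSupport_tent n r).is_zero_at_infty
    have hnorm : ‖D ∘L A (tent n r) - A (tent n r) ∘L D‖ ≤ 1 := by
      simpa using (norm_commutator_le_iff hD₁ hD₂ (hA _ htent)).2 (lipschitzWith_tent n r)
    exact (sum_ofReal_dist_mul_le_tent hp0 hs (htent.summable_mul hp.summable)).trans
      (le_iSup_of_le (tent n r) (le_iSup₂_of_le htent hnorm le_rfl))
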